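/- Let S = (A, φ, W) be an eventually injective DF0L system that is weakly circular with threshold D_w. Then S is strongly circular with strong circularity threshold D_s ≤ D_w + δ_S + 1, where δ_S = max{|φ(u)| : u ≠ v ∈ L(S), φ(u) = φ(v)}. -/

import Mathlib

/-- The morphism on words induced by a map on letters. -/
def applyM {A B : Type*} (f : A → List B) (w : List A) : List B := (w.map f).flatten

/-- `wpow u n` is the word `u` repeated `n` times. -/
def wpow {A : Type*} (u : List A) (n : ℕ) : List A := (List.replicate n u).flatten

/-- A word is primitive if it is nonempty and not a proper power. -/
def Primitive {A : Type*} (w : List A) : Prop := w ≠ [] ∧ ∀ u n, w = wpow u n → n = 1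

/-- Conjugacy of words. -/
def Conj {A : Type*} (u v : List A) : Prop := ∃ x y, u = x ++ y ∧ v = y ++ x

/-- The language of a D(F)0L system with (iterated) morphism `g` and axiom set `W`:
all factors of all `g^[n] w`, `w ∈ W`. -/
def LangG {A : Type*} (g : List A → List A) (W : Set (List A)) : Set (List A) :=
  {u | ∃ n : ℕ, ∃ w ∈ W, u <:+: g^[n] w}

/-- `(s, w, t)` is an interpretation of `u`: `w` is in the language and `g w = s ++ u ++ t`. -/
def Interp {A : Type*} (g : List A → List A) (L : Set (List A)) (s w t u : List A) : Prop :=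
  w ∈ L ∧ g w = s ++ u ++ t

/-- The pair `(u₁, u₂)` is compatible with the interpretation `(s, w, t)` of `u₁ ++ u₂`. -/
def Compatible {A : Type*} (g : List A → List A) (s w t u₁ u₂ : List A) : Prop :=
  ∃ w₁ w₂, w = w₁ ++ w₂ ∧ g w₁ = s ++ u₁ ∧ g w₂ = u₂ ++ t

/-- Weakly synchronizing pair: compatible with all interpretations of `u₁ ++ u₂`. -/
def WeakSync {A : Type*} (g : List A → List A) (L : Set (List A)) (u₁ u₂ : List A) : Prop :=
  ∀ s w t, Interp g L s w t (u₁ ++ u₂) → Compatible g s w t u₁ u₂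

/-- Strongly synchronizing pair. -/
def StrongSync {A : Type*} (g : List A → List A) (L : Set (List A)) (u₁ u₂ : List A) : Prop :=
  u₁ ≠ [] ∧ ∃ a : A, ∀ s w t, Interp g L s w t (u₁ ++ u₂) →
    ∃ w₁ w₂, w = w₁ ++ w₂ ∧ g w₁ = s ++ u₁ ∧ g w₂ = u₂ ++ t ∧ w₁.getLast? = some a

/-- A word is weakly synchronized if some factorization of it is weakly synchronizing. -/
def WeaklySynchronized {A : Type*} (g : List A → List A) (L : Set (List A)) (u : List A) : Prop :=
  ∃ u₁ u₂, u = u₁ ++ u₂ ∧ WeakSync g L u₁ u₂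

/-- An admissible pair: compatible with at least one interpretation. -/
def Admissible {A : Type*} (g : List A → List A) (L : Set (List A)) (u₁ u₂ : List A) : Prop :=
  ∃ s w t, Interp g L s w t (u₁ ++ u₂) ∧ Compatible g s w t u₁ u₂

/-- A word is bounded if the lengths of its iterated images stay bounded. -/
def BoundedWord {A : Type*} (f : A → List A) (w : List A) : Prop :=
  ∃ C, ∀ k : ℕ, ((applyM f)^[k] w).length ≤ C

/-- `Ω(S)`: primitive words all of whose powers belong to the language. -/
def Omega {A : Type*} (f : A → List A) (W : Set (List A)) : Set (List A) :=
  {v | v ∈ LangG (applyM f) W ∧ Primitive v ∧ ∀ k : ℕ, wpow v k ∈ LangG (applyM f) W}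

/-- Minimal interpretation: `|s| < |f(first letter of w)|` and `|t| < |f(last letter of w)|`. -/
def MinInterp {A : Type*} (f : A → List A) (L : Set (List A)) (s w t u : List A) : Prop :=
  Interp (applyM f) L s w t u ∧ w ≠ [] ∧
    (∀ a, w.head? = some a → s.length < (f a).length) ∧
    (∀ b, w.getLast? = some b → t.length < (f b).length)


/-!
Cut `u₁ = x ++ z` and `u₂ = z' ++ y` with `|z| = |z'| = δ + 1`, so that `x` and `y` are longer
than `D_w` and hence weakly synchronized, say at `x = x₁ ++ x₂` and `y = y₁ ++ y₂`. In every
interpretation `(s, w, t)` of `u₁ ++ u₂` these two cuts split `w = α ++ m ++ ζ` with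
`φ(m) = x₂ ++ z ++ z' ++ y₁`. This image is longer than `δ_S`, so by eventual injectivity the
middle `m` is the same word in all interpretations. The admissible interpretation cuts `m` as
`d ++ d'` with `φ(d) = x₂ ++ z`, and this cut, with the last letter of `d`, then works for every
interpretation.
-/

@[simp]
lemma applyM_nil {A B : Type*} (f : A → List B) : applyM f [] = [] := rfl

@[simp]
lemma applyM_append {A B : Type*} (f : A → List B) (u v : List A) :
    applyM f (u ++ v) = applyM f u ++ applyM f v := by
  simp [applyM]

lemma applyM_infix_applyM {A B : Type*} (f : A → List B) {u v : List A} (h : u <:+: v) :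
    applyM f u <:+: applyM f v := by
  obtain ⟨s, t, rfl⟩ := h
  exact ⟨applyM f s, applyM f t, by simp⟩

section LangG

variable {A : Type*} {g : List A → List A} {W : Set (List A)} {u v : List A}

lemma mem_langG_of_infix (h : u <:+: v) (hv : v ∈ LangG g W) : u ∈ LangG g W := by
  obtain ⟨n, w, hw, hvw⟩ := hv
  exact ⟨n, w, hw, h.trans hvw⟩

lemma applyM_mem_langG {f : A → List A} (hv : v ∈ LangG (applyM f) W) :
    applyM f v ∈ LangG (applyM f) W := by
  obtain ⟨n, w, hw, hvw⟩ := hv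
  exact ⟨n + 1, w, hw, Function.iterate_succ_apply' .. ▸ applyM_infix_applyM f hvw⟩

lemma append_mem_langG_of_admissible {f : A → List A}
    (h : Admissible (applyM f) (LangG (applyM f) W) u v) : u ++ v ∈ LangG (applyM f) W := by
  obtain ⟨s, w, t, ⟨hw, hgw⟩, -⟩ := h
  exact mem_langG_of_infix ⟨s, t, hgw.symm⟩ (applyM_mem_langG hw)

end LangG

section Synchronization

variable {A : Type*} {f : A → List A} {L : Set (List A)}

lemma exists_eq_append_of_prefix_of_applyM {p q w a b : List A} (hp : p <+: w) (hq : q <+: w)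
    (hgp : applyM f p = a) (hgq : applyM f q = a ++ b) (hb : b ≠ []) :
    ∃ r, q = p ++ r ∧ applyM f r = b := by
  rcases List.prefix_or_prefix_of_prefix hp hq with ⟨r, rfl⟩ | ⟨r, rfl⟩
  · refine ⟨r, rfl, ?_⟩
    rw [applyM_append, hgp] at hgq
    exact List.append_cancel_left hgq
  · rw [applyM_append, hgq, List.append_assoc] at hgp
    have := congrArg List.length hgp
    have := List.length_pos_of_ne_nil hb
    simp only [List.length_append] at *
    omega

lemma exists_eq_middle_of_weakSync {x₁ x₂ v y₁ y₂ s w t : List A}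
    (hx : WeakSync (applyM f) L x₁ x₂) (hy : WeakSync (applyM f) L y₁ y₂)
    (hv : v ≠ []) (h : Interp (applyM f) L s w t (x₁ ++ x₂ ++ v ++ (y₁ ++ y₂))) :
    ∃ α m ζ, w = α ++ m ++ ζ ∧ applyM f α = s ++ x₁ ∧
      applyM f m = x₂ ++ v ++ y₁ ∧ applyM f ζ = y₂ ++ t := by
  obtain ⟨hw, hgw⟩ := h
  obtain ⟨α, β, rfl, hα, -⟩ := hx s w (v ++ (y₁ ++ y₂) ++ t)
    ⟨hw, by rw [hgw]; simp only [List.append_assoc]⟩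
  obtain ⟨γ, ζ, hγζ, hγ, hζ⟩ := hy (s ++ x₁ ++ x₂ ++ v) (α ++ β) t
    ⟨hw, by rw [hgw]; simp only [List.append_assoc]⟩
  obtain ⟨m, rfl, hm⟩ := exists_eq_append_of_prefix_of_applyM (b := x₂ ++ v ++ y₁)
    (List.prefix_append α β) ⟨ζ, hγζ.symm⟩ hα (by rw [hγ]; simp only [List.append_assoc])
    (by simp [hv])
  exact ⟨α, m, ζ, hγζ, hα, hm, hζ⟩

theorem strongSync_of_weakSync {δ : ℕ} (hL : ∀ ⦃u v⦄, u <:+: v → v ∈ L → u ∈ L)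
    (hδ : ∀ u v : List A, u ∈ L → v ∈ L → u ≠ v → applyM f u = applyM f v →
      (applyM f u).length ≤ δ)
    {x₁ x₂ z z' y₁ y₂ : List A} (hx : WeakSync (applyM f) L x₁ x₂)
    (hy : WeakSync (applyM f) L y₁ y₂) (hz : z ≠ []) (hz' : z' ≠ [])
    (hzz' : δ < z.length + z'.length)
    (hadm : Admissible (applyM f) L (x₁ ++ x₂ ++ z) (z' ++ (y₁ ++ y₂))) :
    StrongSync (applyM f) L (x₁ ++ x₂ ++ z) (z' ++ (y₁ ++ y₂)) := by
  have hmiddle {s w t}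
      (h : Interp (applyM f) L s w t (x₁ ++ x₂ ++ z ++ (z' ++ (y₁ ++ y₂)))) :=
    exists_eq_middle_of_weakSync (v := z ++ z') hx hy (by simp [hz])
      (by simpa only [List.append_assoc] using h)
  obtain ⟨s₀, w₀, t₀, hI₀, p₁, p₂, rfl, hp₁, -⟩ := hadm
  obtain ⟨α₀, m₀, ζ₀, hw₀, hα₀, hm₀, -⟩ := hmiddle hI₀
  obtain ⟨d, rfl, hd⟩ := exists_eq_append_of_prefix_of_applyM (b := x₂ ++ z)
    ⟨m₀ ++ ζ₀, by rw [hw₀, List.append_assoc]⟩ (List.prefix_append p₁ p₂) hα₀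
    (by simp [hp₁]) (by simp [hz])
  obtain ⟨d', hd'₀, hd'⟩ := exists_eq_append_of_prefix_of_applyM (f := f)
    (a := s₀ ++ x₁ ++ x₂ ++ z) (b := z' ++ y₁)
    (List.prefix_append _ p₂) ⟨ζ₀, hw₀.symm⟩
    (by simp [hα₀, hd]) (by simp [hα₀, hm₀]) (by simp [hz'])
  have hm₀d : m₀ = d ++ d' := List.append_cancel_left (by rw [hd'₀, List.append_assoc])
  have hd_ne : d ≠ [] := by
    rintro rfl
    simp [hz] at hd
  refine ⟨by simp [hz], d.getLast hd_ne, fun s w t hI ↦ ?_⟩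
  obtain ⟨α, m, ζ, rfl, hα, hm, hζ⟩ := hmiddle hI
  have hm_mem : m ∈ L := hL (List.infix_append α m ζ) hI.1
  have hm₀_mem : m₀ ∈ L := hL (hw₀ ▸ List.infix_append α₀ m₀ ζ₀) hI₀.1
  obtain rfl : m = m₀ := by
    by_contra hne
    have := hδ m m₀ hm_mem hm₀_mem hne (hm.trans hm₀.symm)
    simp only [hm, List.length_append] at this
    omega
  refine ⟨α ++ d, d' ++ ζ, by simp [hm₀d], ?_, ?_, ?_⟩
  · simp [hα, hd]
  · simp [hd', hζ]
  · rw [List.getLast?_append_of_ne_nil _ hd_ne, List.getLast?_eq_some_getLast hd_ne]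

end Synchronization

theorem stmt10_general {A : Type*} (f : A → List A)
    (W : Set (List A))
    (Dw δ : ℕ)
    (hδ : ∀ u v : List A, u ∈ LangG (applyM f) W → v ∈ LangG (applyM f) W →
      u ≠ v → applyM f u = applyM f v → (applyM f u).length ≤ δ)
    (hweak : ∀ u ∈ LangG (applyM f) W, Dw < u.length →
      WeaklySynchronized (applyM f) (LangG (applyM f) W) u) :
    ∀ u₁ u₂ : List A,
      Admissible (applyM f) (LangG (applyM f) W) u₁ u₂ →
      Dw + δ + 1 < u₁.length → Dw + δ + 1 < u₂.length →
      StrongSync (applyM f) (LangG (applyM f) W) u₁ u₂ := by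
  intro u₁ u₂ hadm h₁ h₂
  have hmem := append_mem_langG_of_admissible hadm
  obtain ⟨x, z, rfl, hz, hx_len⟩ :
      ∃ x z, u₁ = x ++ z ∧ z.length = δ + 1 ∧ Dw < x.length :=
    ⟨_, _, (List.take_append_drop (u₁.length - (δ + 1)) u₁).symm, by simp; omega,
      by simp; omega⟩
  obtain ⟨z', y, rfl, hz', hy_len⟩ :
      ∃ z' y, u₂ = z' ++ y ∧ z'.length = δ + 1 ∧ Dw < y.length :=
    ⟨_, _, (List.take_append_drop (δ + 1) u₂).symm, by simp; omega, by simp; omega⟩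
  obtain ⟨x₁, x₂, rfl, hx⟩ :=
    hweak x (mem_langG_of_infix ⟨[], z ++ (z' ++ y), by simp⟩ hmem) hx_len
  obtain ⟨y₁, y₂, rfl, hy⟩ :=
    hweak y (mem_langG_of_infix ⟨x₁ ++ x₂ ++ z ++ z', [], by simp⟩ hmem) hy_len
  exact strongSync_of_weakSync (fun _ _ ↦ mem_langG_of_infix) hδ hx hy
    (List.ne_nil_of_length_pos (by omega)) (List.ne_nil_of_length_pos (by omega)) (by omega) hadm

theorem stmt10 {A : Type*} (f : A → List A)
    (W : Set (List A)) (hWfin : W.Finite) (hWne : W.Nonempty)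
    (hax : ∀ w ∈ W, w ≠ [])
    (Dw δ : ℕ)
    (hδ : ∀ u v : List A, u ∈ LangG (applyM f) W → v ∈ LangG (applyM f) W →
      u ≠ v → applyM f u = applyM f v → (applyM f u).length ≤ δ)
    (hweak : ∀ u ∈ LangG (applyM f) W, Dw < u.length →
      WeaklySynchronized (applyM f) (LangG (applyM f) W) u) :
    ∀ u₁ u₂ : List A,
      Admissible (applyM f) (LangG (applyM f) W) u₁ u₂ →
      Dw + δ + 1 < u₁.length → Dw + δ + 1 < u₂.length →
      StrongSync (applyM f) (LangG (applyM f) W) u₁ u₂ :=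
  stmt10_general f W Dw δ hδ hweak
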